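/- arXiv:1712.03794 — 6 statements merged into one kernel-verified Lean document; each statement's English description precedes it below -/
import Mathlib

section
/- Let T be a bounded, left-invertible and analytic operator on a complex Hilbert space H, E = ker T*, P_E the orthogonal projection onto E, L = (T*T)⁻¹T*. If a bounded operator A on H is a multiplication operator with some symbol φ : ℕ → B(E), then A commutes with T: AT = TA. -/
/-!
Let `E = ker T†`. The identity `L = (T†T)⁻¹T†` enters only through `T† T L = T†`, which makes
`T L` the identity on `Eᗮ`. Hence a vector `g` with `P_E (Lⁿ g) = 0` for all `n` satisfies
`g = Tⁿ (Lⁿ g)` for every `n`, and analyticity of `T` forces `g = 0`. So it suffices to see that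
`A T f` and `T A f` have the same coefficients `P_E (Lⁿ ·)`, which follows from the
multiplication formula because `P_E T = 0` and `Lⁿ⁺¹ T = Lⁿ`.
-/

open ContinuousLinearMap Submodule

theorem ContinuousLinearMap.pow_succ_apply_apply_of_mul_eq_one {R M : Type*} [Semiring R]
    [TopologicalSpace M] [AddCommMonoid M] [Module R M] {T L : M →L[R] M}
    (hLT : L * T = 1) (n : ℕ) (f : M) : (L ^ (n + 1)) (T f) = (L ^ n) f := by
  rw [pow_succ, mul_apply_eq_comp, ← mul_apply_eq_comp L T, hLT, one_apply_eq_self]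

section MultiplicationOperator

variable {𝕜 H : Type*} [RCLike 𝕜] [NormedAddCommGroup H] [InnerProductSpace 𝕜 H]
  [CompleteSpace H]

theorem ContinuousLinearMap.apply_mem_orthogonal_ker_adjoint (T : H →L[𝕜] H) (x : H) :
    T x ∈ (LinearMap.ker (adjoint T : H →ₗ[𝕜] H))ᗮ :=
  T.orthogonal_range ▸ le_orthogonal_orthogonal _ ⟨x, rfl⟩

theorem ContinuousLinearMap.apply_apply_eq_self_of_orthogonalProjectionOnto_eq_zero
    {T L : H →L[𝕜] H} (hL : adjoint T * T * L = adjoint T) {g : H}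
    (hg : (LinearMap.ker (adjoint T : H →ₗ[𝕜] H)).orthogonalProjectionOnto g = 0) :
    T (L g) = g := by
  have h_ker : g - T (L g) ∈ LinearMap.ker (adjoint T : H →ₗ[𝕜] H) := by
    rw [LinearMap.mem_ker, ContinuousLinearMap.coe_coe, map_sub, sub_eq_zero]
    exact congr($hL g).symm
  have h_orth : g - T (L g) ∈ (LinearMap.ker (adjoint T : H →ₗ[𝕜] H))ᗮ :=
    sub_mem (orthogonalProjectionOnto_eq_zero_iff.mp hg) (T.apply_mem_orthogonal_ker_adjoint _)
  have := (inf_orthogonal_eq_bot _).le ⟨h_ker, h_orth⟩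
  rw [mem_bot, sub_eq_zero] at this
  exact this.symm

theorem ContinuousLinearMap.pow_apply_pow_apply_eq_self {T L : H →L[𝕜] H}
    (hL : adjoint T * T * L = adjoint T) {g : H}
    (hg : ∀ n, (LinearMap.ker (adjoint T : H →ₗ[𝕜] H)).orthogonalProjectionOnto ((L ^ n) g) = 0)
    (n : ℕ) : (T ^ n) ((L ^ n) g) = g := by
  induction n with
  | zero => simp
  | succ n ih =>
    rw [pow_succ T, pow_succ' L, mul_apply_eq_comp, mul_apply_eq_comp,
      apply_apply_eq_self_of_orthogonalProjectionOnto_eq_zero hL (hg n), ih]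

theorem ContinuousLinearMap.eq_zero_of_forall_orthogonalProjectionOnto_pow_eq_zero
    {T L : H →L[𝕜] H} (hT : ⨅ n : ℕ, LinearMap.range ((T ^ n : H →L[𝕜] H) : H →ₗ[𝕜] H) = ⊥)
    (hL : adjoint T * T * L = adjoint T) {g : H}
    (hg : ∀ n, (LinearMap.ker (adjoint T : H →ₗ[𝕜] H)).orthogonalProjectionOnto ((L ^ n) g) = 0) :
    g = 0 := by
  have : g ∈ ⨅ n : ℕ, LinearMap.range ((T ^ n : H →L[𝕜] H) : H →ₗ[𝕜] H) :=
    mem_iInf _ |>.mpr fun n ↦ ⟨(L ^ n) g, pow_apply_pow_apply_eq_self hL hg n⟩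
  rwa [hT, mem_bot] at this

def IsMultiplicationOperator (T L A : H →L[𝕜] H)
    (φ : ℕ → (LinearMap.ker (adjoint T : H →ₗ[𝕜] H) →L[𝕜] LinearMap.ker (adjoint T : H →ₗ[𝕜] H))) :
    Prop :=
  ∀ (f : H) (n : ℕ),
    (LinearMap.ker (adjoint T : H →ₗ[𝕜] H)).orthogonalProjectionOnto ((L ^ n) (A f)) =
      ∑ k ∈ Finset.range (n + 1),
        φ k ((LinearMap.ker (adjoint T : H →ₗ[𝕜] H)).orthogonalProjectionOnto ((L ^ (n - k)) f))

namespace IsMultiplicationOperator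

variable {T L A : H →L[𝕜] H}
  {φ : ℕ → (LinearMap.ker (adjoint T : H →ₗ[𝕜] H) →L[𝕜] LinearMap.ker (adjoint T : H →ₗ[𝕜] H))}

theorem orthogonalProjectionOnto_pow_apply_comm (hA : IsMultiplicationOperator T L A φ)
    (hLT : L * T = 1) (f : H) (n : ℕ) :
    (LinearMap.ker (adjoint T : H →ₗ[𝕜] H)).orthogonalProjectionOnto ((L ^ n) (A (T f))) =
      (LinearMap.ker (adjoint T : H →ₗ[𝕜] H)).orthogonalProjectionOnto ((L ^ n) (T (A f))) := by
  have hPT (x : H) :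
      (LinearMap.ker (adjoint T : H →ₗ[𝕜] H)).orthogonalProjectionOnto (T x) = 0 :=
    orthogonalProjectionOnto_eq_zero_iff.mpr (T.apply_mem_orthogonal_ker_adjoint x)
  cases n with
  | zero => rw [hA (T f) 0]; simp [hPT]
  | succ n =>
    rw [pow_succ_apply_apply_of_mul_eq_one hLT, hA (T f), hA f, Finset.sum_range_succ,
      Nat.sub_self, pow_zero, one_apply_eq_self, hPT, map_zero, add_zero]
    refine Finset.sum_congr rfl fun k hk ↦ ?_
    rw [Nat.sub_add_comm (Finset.mem_range_succ_iff.mp hk),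
      pow_succ_apply_apply_of_mul_eq_one hLT]

theorem mul_comm (hA : IsMultiplicationOperator T L A φ)
    (hT : ⨅ n : ℕ, LinearMap.range ((T ^ n : H →L[𝕜] H) : H →ₗ[𝕜] H) = ⊥)
    (hLT : L * T = 1) (hL : adjoint T * T * L = adjoint T) : A * T = T * A := by
  ext f
  rw [mul_apply_eq_comp, mul_apply_eq_comp, ← sub_eq_zero]
  refine eq_zero_of_forall_orthogonalProjectionOnto_pow_eq_zero hT hL fun n ↦ ?_
  rw [map_sub, map_sub, hA.orthogonalProjectionOnto_pow_apply_comm hLT, sub_self]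

end IsMultiplicationOperator

end MultiplicationOperator

theorem stmt_2_general
    {H : Type*} [NormedAddCommGroup H] [InnerProductSpace ℂ H] [CompleteSpace H]
    (T S : H →L[ℂ] H)
    (hanalytic : (⨅ n : ℕ, LinearMap.range ((T ^ n : H →L[ℂ] H) : H →ₗ[ℂ] H)) = ⊥)
    (hS1 : S * (ContinuousLinearMap.adjoint T * T) = 1)
    (hS2 : (ContinuousLinearMap.adjoint T * T) * S = 1)
    (L : H →L[ℂ] H) (hL : L = S * ContinuousLinearMap.adjoint T)
    (A : H →L[ℂ] H)
    (φ : ℕ → (LinearMap.ker (ContinuousLinearMap.adjoint T : H →ₗ[ℂ] H) →L[ℂ]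
      LinearMap.ker (ContinuousLinearMap.adjoint T : H →ₗ[ℂ] H)))
    (hA : ∀ (f : H) (n : ℕ),
      Submodule.orthogonalProjectionOnto (LinearMap.ker (ContinuousLinearMap.adjoint T : H →ₗ[ℂ] H)) ((L ^ n) (A f)) =
        ∑ k ∈ Finset.range (n + 1), φ k
          (Submodule.orthogonalProjectionOnto (LinearMap.ker (ContinuousLinearMap.adjoint T : H →ₗ[ℂ] H))
            ((L ^ (n - k)) f))) :
    A * T = T * A := by
  have hA : IsMultiplicationOperator T L A φ := hA
  refine hA.mul_comm hanalytic (by rw [hL, mul_assoc, hS1]) ?_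
  rw [hL, ← mul_assoc, hS2, one_mul]

/-- Let `T` be bounded, left-invertible and analytic on a complex Hilbert
space `H`, `E = ker T*`, `P_E` the orthogonal projection onto `E`, `L = (T*T)⁻¹T*`.  If a
bounded operator `A` on `H` is a multiplication operator with some symbol `φ : ℕ → B(E)`,
then `A` commutes with `T`: `AT = TA`. -/
theorem stmt_2
    {H : Type*} [NormedAddCommGroup H] [InnerProductSpace ℂ H] [CompleteSpace H]
    (T S : H →L[ℂ] H)
    (hbelow : ∃ α : ℝ, 0 < α ∧ ∀ f : H, α * ‖f‖ ^ 2 ≤ ‖T f‖ ^ 2)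
    (hanalytic : (⨅ n : ℕ, LinearMap.range ((T ^ n : H →L[ℂ] H) : H →ₗ[ℂ] H)) = ⊥)
    (hS1 : S * (ContinuousLinearMap.adjoint T * T) = 1)
    (hS2 : (ContinuousLinearMap.adjoint T * T) * S = 1)
    (L : H →L[ℂ] H) (hL : L = S * ContinuousLinearMap.adjoint T)
    (A : H →L[ℂ] H)
    (φ : ℕ → (LinearMap.ker (ContinuousLinearMap.adjoint T : H →ₗ[ℂ] H) →L[ℂ]
      LinearMap.ker (ContinuousLinearMap.adjoint T : H →ₗ[ℂ] H)))
    (hA : ∀ (f : H) (n : ℕ),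
      Submodule.orthogonalProjectionOnto (LinearMap.ker (ContinuousLinearMap.adjoint T : H →ₗ[ℂ] H)) ((L ^ n) (A f)) =
        ∑ k ∈ Finset.range (n + 1), φ k
          (Submodule.orthogonalProjectionOnto (LinearMap.ker (ContinuousLinearMap.adjoint T : H →ₗ[ℂ] H))
            ((L ^ (n - k)) f))) :
    A * T = T * A :=
  stmt_2_general T S hanalytic hS1 hS2 L hL A φ hA
end

section
/- Let T be a bounded, left-invertible and analytic operator on a complex Hilbert space H, E = ker T*, P_E the orthogonal projection onto E, L = (T*T)⁻¹T*. If a bounded operator A on H commutes with T (AT = TA), then A is a multiplication operator with symbol φ_A given by φ_A(m) = P_E L^m A|_E ∈ B(E); explicitly, for every f ∈ H and every n ∈ ℕ: P_E L^n(A f) = Σ_{k=0}^{n} P_E L^k A P_E L^{n−k} f. -/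
/-!
Since `L T = 1` and `T* T L = T*`, the operator `T L` is the orthogonal projection onto the range
of `T`, so `P_E = 1 - T L`. The formula then becomes an identity in the ring `B(H)` that only uses
`L T = 1` and `A T = T A`: splitting off the term with `L^0` on the right, one step of the
induction on `n` is `P L^(n+1) A P = P L^(n+1) A - P L^n A L`.
-/

open Finset ContinuousLinearMap

theorem compl_mul_pow_mul_eq_sum_antidiagonal {R : Type*} [Ring R] {T L A : R}
    (hLT : L * T = 1) (hAT : A * T = T * A) (n : ℕ) :
    (1 - T * L) * L ^ n * A =
      ∑ p ∈ antidiagonal n, (1 - T * L) * L ^ p.1 * A * (1 - T * L) * L ^ p.2 := by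
  have hAP (X : R) : X * A * (1 - T * L) = X * A - X * T * A * L := by
    simp only [mul_sub, mul_one, ← mul_assoc, mul_assoc X A T, hAT]
  induction n with
  | zero =>
    have hPT : (1 - T * L) * T = 0 := by rw [sub_mul, one_mul, mul_assoc, hLT, mul_one, sub_self]
    simp [hAP, hPT]
  | succ n ih =>
    have hLT' : L ^ (n + 1) * T = L ^ n := by rw [pow_succ, mul_assoc, hLT, mul_one]
    simp only [Nat.sum_antidiagonal_succ', pow_succ _ (Prod.snd _), ← mul_assoc, ← sum_mul, ← ih,
      pow_zero, mul_one]
    rw [hAP, mul_assoc _ (L ^ (n + 1)) T, hLT', sub_add_cancel]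

theorem starProjection_ker_adjoint_eq {𝕜 H : Type*} [RCLike 𝕜] [NormedAddCommGroup H]
    [InnerProductSpace 𝕜 H] [CompleteSpace H] {T L : H →L[𝕜] H}
    (hTL : adjoint T * T * L = adjoint T) :
    (LinearMap.ker (adjoint T : H →ₗ[𝕜] H)).starProjection = 1 - T * L := by
  ext x
  apply Submodule.eq_starProjection_of_mem_of_inner_eq_zero
  · change adjoint T (x - T (L x)) = 0
    rw [map_sub, ← mul_apply_eq_comp, ← mul_apply_eq_comp, hTL, sub_self]
  · intro w hw
    rw [sub_apply, one_apply_eq_self, sub_sub_cancel, mul_apply_eq_comp, ← adjoint_inner_right,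
      show adjoint T w = 0 from hw, inner_zero_right]

theorem stmt_4_general
    {H : Type*} [NormedAddCommGroup H] [InnerProductSpace ℂ H] [CompleteSpace H]
    (T S : H →L[ℂ] H)
    (hS1 : S * (ContinuousLinearMap.adjoint T * T) = 1)
    (hS2 : (ContinuousLinearMap.adjoint T * T) * S = 1)
    (L : H →L[ℂ] H) (hL : L = S * ContinuousLinearMap.adjoint T)
    (A : H →L[ℂ] H) (hcomm : A * T = T * A) :
    ∀ (f : H) (n : ℕ),
      Submodule.orthogonalProjectionOnto (LinearMap.ker (ContinuousLinearMap.adjoint T : H →ₗ[ℂ] H)) ((L ^ n) (A f)) =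
        ∑ k ∈ Finset.range (n + 1),
          Submodule.orthogonalProjectionOnto (LinearMap.ker (ContinuousLinearMap.adjoint T : H →ₗ[ℂ] H))
            ((L ^ k) (A (↑(Submodule.orthogonalProjectionOnto (LinearMap.ker (ContinuousLinearMap.adjoint T : H →ₗ[ℂ] H))
              ((L ^ (n - k)) f))))) := by
  intro f n
  have hLT : L * T = 1 := by rw [hL, mul_assoc, hS1]
  have hP : (LinearMap.ker (adjoint T : H →ₗ[ℂ] H)).starProjection = 1 - T * L := by
    apply starProjection_ker_adjoint_eq
    rw [hL, ← mul_assoc, hS2, one_mul]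
  apply Subtype.ext
  simp only [Submodule.coe_sum, Submodule.coe_orthogonalProjectionOnto_apply, hP]
  have hsum := congr($(compl_mul_pow_mul_eq_sum_antidiagonal hLT hcomm n) f)
  rw [Nat.sum_antidiagonal_eq_sum_range_succ
    (fun i j => (1 - T * L) * L ^ i * A * (1 - T * L) * L ^ j)] at hsum
  simpa only [_root_.sum_apply, mul_apply_eq_comp, Nat.succ_eq_add_one] using hsum

/-- Let `T` be bounded, left-invertible and analytic on a complex Hilbert
space `H`, `E = ker T*`, `P_E` the orthogonal projection onto `E`, `L = (T*T)⁻¹T*`.  If a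
bounded operator `A` on `H` commutes with `T`, then `A` is a multiplication operator with
symbol `φ_A(m) = P_E L^m A|_E`; explicitly, for every `f ∈ H` and every `n ∈ ℕ`:
`P_E L^n (A f) = Σ_{k=0}^{n} P_E L^k A P_E L^{n−k} f`. -/
theorem stmt_4
    {H : Type*} [NormedAddCommGroup H] [InnerProductSpace ℂ H] [CompleteSpace H]
    (T S : H →L[ℂ] H)
    (hbelow : ∃ α : ℝ, 0 < α ∧ ∀ f : H, α * ‖f‖ ^ 2 ≤ ‖T f‖ ^ 2)
    (hanalytic : (⨅ n : ℕ, LinearMap.range ((T ^ n : H →L[ℂ] H) : H →ₗ[ℂ] H)) = ⊥)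
    (hS1 : S * (ContinuousLinearMap.adjoint T * T) = 1)
    (hS2 : (ContinuousLinearMap.adjoint T * T) * S = 1)
    (L : H →L[ℂ] H) (hL : L = S * ContinuousLinearMap.adjoint T)
    (A : H →L[ℂ] H) (hcomm : A * T = T * A) :
    ∀ (f : H) (n : ℕ),
      Submodule.orthogonalProjectionOnto (LinearMap.ker (ContinuousLinearMap.adjoint T : H →ₗ[ℂ] H)) ((L ^ n) (A f)) =
        ∑ k ∈ Finset.range (n + 1),
          Submodule.orthogonalProjectionOnto (LinearMap.ker (ContinuousLinearMap.adjoint T : H →ₗ[ℂ] H))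
            ((L ^ k) (A (↑(Submodule.orthogonalProjectionOnto (LinearMap.ker (ContinuousLinearMap.adjoint T : H →ₗ[ℂ] H))
              ((L ^ (n - k)) f))))) :=
  stmt_4_general T S hS1 hS2 L hL A hcomm
end

section
/- Let T be a bounded left-invertible operator on a complex Hilbert space H, E = ker T*, L = (T*T)⁻¹T*, r(L) the spectral radius of L. For every e ∈ E and every λ ∈ ℂ with |λ|·r(L) < 1, the series h_{λ,e} := Σ_{n≥0} λ^n (L*)^n e converges in H and T* h_{λ,e} = λ·h_{λ,e}. Moreover, if T is analytic and H ≠ {0}, then every λ ∈ ℂ with |λ|·r(L) < 1 is an eigenvalue of T*. -/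
/-!
Since `L T = 1`, taking adjoints gives `T* L* = 1`, so `T*` shifts the series
`h = Σ λⁿ (L*)ⁿ e` back by one term; the term `n = 0` is killed because `e ∈ ker T*`, hence
`T* h = λ h`. The series converges because `r(L*) = r(L)` and `Σ |λ|ⁿ ‖Lⁿ‖ < ∞` whenever
`|λ| r(L) < 1`. Since `L e = 0`, every term with `n ≥ 1` is orthogonal to `e`, so
`⟪e, h⟫ = ‖e‖² ≠ 0` once `e ≠ 0`. Such an `e` exists when `T` is analytic: if `ker T* = 0`,
then `T (T*T)⁻¹ T*` is the identity, `T` is onto, and `⋂ ran Tⁿ = H`.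
-/

open scoped NNReal ENNReal
open ContinuousLinearMap

theorem spectralRadius_ne_top {A : Type*} [NormedRing A] [NormedAlgebra ℂ A] [CompleteSpace A]
    (a : A) : spectralRadius ℂ a ≠ ∞ :=
  ne_top_of_le_ne_top (by finiteness) (spectrum.spectralRadius_le_pow_nnnorm_pow_one_div ℂ a 0)

theorem spectralRadius_star {A : Type*} [NormedRing A] [NormedAlgebra ℂ A] [StarRing A]
    [StarModule ℂ A] (a : A) : spectralRadius ℂ (star a) = spectralRadius ℂ a := by
  simp only [spectralRadius, spectrum.map_star, ← Set.image_star, iSup_image, nnnorm_star]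

theorem summable_norm_pow_mul_norm_pow {A : Type*} [NormedRing A] [NormedAlgebra ℂ A]
    [CompleteSpace A] (a : A) {lam : ℂ} (h : (‖lam‖₊ : ℝ≥0∞) * spectralRadius ℂ a < 1) :
    Summable fun n : ℕ => ‖lam‖ ^ n * ‖a ^ n‖ := by
  have hlam : (‖lam‖₊ : ℝ≥0∞) < (spectralRadius ℂ a)⁻¹ := by
    rwa [← one_div, ENNReal.lt_div_iff_mul_lt (.inr ENNReal.coe_ne_top)
      (.inl (spectralRadius_ne_top a))]
  obtain ⟨r, hlam_r, hr⟩ := ENNReal.lt_iff_exists_nnreal_btwn.mp hlam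
  have r_pos : 0 < r := pos_of_gt (ENNReal.coe_lt_coe.mp hlam_r)
  -- `Σ zⁿ aⁿ` is the power series of the resolvent `z ↦ (1 - z a)⁻¹`, which is holomorphic on
  -- the disc of radius `r(a)⁻¹`, so its radius of convergence is at least `r`.
  have hp := (spectrum.hasFPowerSeriesOnBall_inverse_one_sub_smul ℂ a).exchange_radius
    ((spectrum.differentiableOn_inverse_one_sub_smul hr).hasFPowerSeriesOnBall r_pos)
  simpa [ContinuousMultilinearMap.norm_mkPiRing, mul_comm] using
    FormalMultilinearSeries.summable_norm_mul_pow _ (hlam_r.trans_le hp.r_le)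

theorem summable_pow_smul_pow_apply {E : Type*} [NormedAddCommGroup E] [NormedSpace ℂ E]
    [CompleteSpace E] (B : E →L[ℂ] E) (x : E) {lam : ℂ}
    (h : (‖lam‖₊ : ℝ≥0∞) * spectralRadius ℂ B < 1) :
    Summable fun n : ℕ => lam ^ n • (B ^ n) x := by
  refine .of_norm_bounded ((summable_norm_pow_mul_norm_pow B h).mul_right ‖x‖) fun n => ?_
  rw [norm_smul, norm_pow, mul_assoc]
  gcongr
  exact (B ^ n).le_opNorm x

theorem apply_tsum_pow_smul_pow_apply {R E : Type*} [Semiring R] [AddCommGroup E]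
    [TopologicalSpace E] [IsTopologicalAddGroup E] [T2Space E] [Module R E]
    [ContinuousConstSMul R E] {A B : E →L[R] E} (hAB : A * B = 1) {x : E} (hx : A x = 0)
    {lam : R} (hs : Summable fun n : ℕ => lam ^ n • (B ^ n) x) :
    A (∑' n : ℕ, lam ^ n • (B ^ n) x) = lam • ∑' n : ℕ, lam ^ n • (B ^ n) x := by
  have hshift : ∀ n : ℕ, A (lam ^ (n + 1) • (B ^ (n + 1)) x) = lam • lam ^ n • (B ^ n) x := by
    intro n
    have hBn : A * B ^ (n + 1) = B ^ n := by rw [pow_succ', ← mul_assoc, hAB, one_mul]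
    rw [map_smul, pow_succ', mul_smul, ← hBn]
    rfl
  rw [A.map_tsum hs, (hs.mapL A).tsum_eq_zero_add]
  simp only [pow_zero, one_smul, one_apply_eq_self, hx, zero_add, hshift]
  exact (hs.hasSum.const_smul lam).tsum_eq

section HilbertSpace

variable {H : Type*} [NormedAddCommGroup H] [InnerProductSpace ℂ H] [CompleteSpace H]

theorem summable_and_adjoint_apply_tsum_eq_smul {T L : H →L[ℂ] H} (hLT : L * T = 1) {e : H}
    (he : adjoint T e = 0) {lam : ℂ} (hlam : (‖lam‖₊ : ℝ≥0∞) * spectralRadius ℂ L < 1) :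
    Summable (fun n : ℕ => lam ^ n • (adjoint L ^ n) e) ∧
      adjoint T (∑' n : ℕ, lam ^ n • (adjoint L ^ n) e) =
        lam • ∑' n : ℕ, lam ^ n • (adjoint L ^ n) e := by
  have hTL : adjoint T * adjoint L = 1 := by
    rw [← star_eq_adjoint, ← star_eq_adjoint, ← star_mul, hLT, star_one]
  rw [← spectralRadius_star, star_eq_adjoint] at hlam
  have hs := summable_pow_smul_pow_apply (adjoint L) e hlam
  exact ⟨hs, apply_tsum_pow_smul_pow_apply hTL he hs⟩

theorem tsum_pow_smul_adjoint_pow_apply_ne_zero {L : H →L[ℂ] H} {e : H} (hLe : L e = 0)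
    (he : e ≠ 0) {lam : ℂ} (hs : Summable fun n : ℕ => lam ^ n • (adjoint L ^ n) e) :
    ∑' n : ℕ, lam ^ n • (adjoint L ^ n) e ≠ 0 := by
  have horth : ∀ n ≠ 0, innerSL ℂ e (lam ^ n • (adjoint L ^ n) e) = 0 := by
    intro n hn
    obtain ⟨m, rfl⟩ := Nat.exists_eq_add_one_of_ne_zero hn
    rw [innerSL_apply_apply, inner_smul_right, ← star_eq_adjoint, ← star_pow, star_eq_adjoint,
      adjoint_inner_right, pow_succ L, mul_apply_eq_comp, hLe]
    simp
  have hinner : innerSL ℂ e (∑' n : ℕ, lam ^ n • (adjoint L ^ n) e) = inner ℂ e e := by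
    rw [(innerSL ℂ e).map_tsum hs, tsum_eq_single 0 horth]
    simp
  intro h0
  rw [h0, map_zero, eq_comm] at hinner
  exact inner_self_ne_zero.mpr he hinner

theorem ker_adjoint_ne_bot [Nontrivial H] {T S : H →L[ℂ] H} (hS : adjoint T * T * S = 1)
    (hT : ⨅ n : ℕ, LinearMap.range ((T ^ n : H →L[ℂ] H) : H →ₗ[ℂ] H) = ⊥) :
    LinearMap.ker ((adjoint T : H →L[ℂ] H) : H →ₗ[ℂ] H) ≠ ⊥ := by
  intro hker
  have hsurj : Function.Surjective T := by
    intro h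
    refine ⟨S (adjoint T h), sub_eq_zero.mp (LinearMap.ker_eq_bot'.mp hker _ ?_)⟩
    rw [coe_coe, map_sub, sub_eq_zero]
    exact congr($hS (adjoint T h))
  have hrange : ∀ n : ℕ, LinearMap.range ((T ^ n : H →L[ℂ] H) : H →ₗ[ℂ] H) = ⊤ := fun n =>
    LinearMap.range_eq_top.mpr (by rw [coe_coe, FunLike.coe_pow_eq_iterate]; exact hsurj.iterate n)
  rw [iInf_congr hrange, iInf_top] at hT
  exact top_ne_bot hT

end HilbertSpace

theorem stmt_6_general
    {H : Type*} [NormedAddCommGroup H] [InnerProductSpace ℂ H] [CompleteSpace H]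
    (T S : H →L[ℂ] H)
    (hS1 : S * (ContinuousLinearMap.adjoint T * T) = 1)
    (hS2 : (ContinuousLinearMap.adjoint T * T) * S = 1)
    (L : H →L[ℂ] H) (hL : L = S * ContinuousLinearMap.adjoint T) :
    (∀ e ∈ LinearMap.ker ((ContinuousLinearMap.adjoint T : H →L[ℂ] H) : H →ₗ[ℂ] H),
      ∀ lam : ℂ, (‖lam‖₊ : ENNReal) * spectralRadius ℂ L < 1 →
        Summable (fun n : ℕ => lam ^ n • (ContinuousLinearMap.adjoint L ^ n) e) ∧
        ContinuousLinearMap.adjoint T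
            (∑' n : ℕ, lam ^ n • (ContinuousLinearMap.adjoint L ^ n) e) =
          lam • ∑' n : ℕ, lam ^ n • (ContinuousLinearMap.adjoint L ^ n) e) ∧
    (((⨅ n : ℕ, LinearMap.range ((T ^ n : H →L[ℂ] H) : H →ₗ[ℂ] H)) = ⊥) → Nontrivial H →
      ∀ lam : ℂ, (‖lam‖₊ : ENNReal) * spectralRadius ℂ L < 1 →
        ∃ h : H, h ≠ 0 ∧ ContinuousLinearMap.adjoint T h = lam • h) := by
  have hLT : L * T = 1 := by rw [hL, mul_assoc, hS1]
  refine ⟨fun e he lam hlam => summable_and_adjoint_apply_tsum_eq_smul hLT he hlam,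
    fun hT _ lam hlam => ?_⟩
  obtain ⟨e, he, he0⟩ := (Submodule.ne_bot_iff _).mp (ker_adjoint_ne_bot hS2 hT)
  have hLe : L e = 0 := by rw [hL, mul_apply_eq_comp, show adjoint T e = 0 from he, map_zero]
  obtain ⟨hs, heigen⟩ := summable_and_adjoint_apply_tsum_eq_smul hLT he hlam
  exact ⟨_, tsum_pow_smul_adjoint_pow_apply_ne_zero hLe he0 hs, heigen⟩

/-- Let `T` be bounded and left-invertible on a complex Hilbert space `H`,
`E = ker T*`, `L = (T*T)⁻¹T*`, `r(L)` the spectral radius of `L`.  For every `e ∈ E` and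
`λ` with `|λ|·r(L) < 1`, the series `h_{λ,e} = Σ λ^n (L*)^n e` converges in `H` and
`T* h_{λ,e} = λ·h_{λ,e}`.  Moreover, if `T` is analytic and `H ≠ {0}`, then every such `λ`
is an eigenvalue of `T*`. -/
theorem stmt_6
    {H : Type*} [NormedAddCommGroup H] [InnerProductSpace ℂ H] [CompleteSpace H]
    (T S : H →L[ℂ] H)
    (hbelow : ∃ α : ℝ, 0 < α ∧ ∀ f : H, α * ‖f‖ ^ 2 ≤ ‖T f‖ ^ 2)
    (hS1 : S * (ContinuousLinearMap.adjoint T * T) = 1)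
    (hS2 : (ContinuousLinearMap.adjoint T * T) * S = 1)
    (L : H →L[ℂ] H) (hL : L = S * ContinuousLinearMap.adjoint T) :
    (∀ e ∈ LinearMap.ker ((ContinuousLinearMap.adjoint T : H →L[ℂ] H) : H →ₗ[ℂ] H),
      ∀ lam : ℂ, (‖lam‖₊ : ENNReal) * spectralRadius ℂ L < 1 →
        Summable (fun n : ℕ => lam ^ n • (ContinuousLinearMap.adjoint L ^ n) e) ∧
        ContinuousLinearMap.adjoint T
            (∑' n : ℕ, lam ^ n • (ContinuousLinearMap.adjoint L ^ n) e) =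
          lam • ∑' n : ℕ, lam ^ n • (ContinuousLinearMap.adjoint L ^ n) e) ∧
    (((⨅ n : ℕ, LinearMap.range ((T ^ n : H →L[ℂ] H) : H →ₗ[ℂ] H)) = ⊥) → Nontrivial H →
      ∀ lam : ℂ, (‖lam‖₊ : ENNReal) * spectralRadius ℂ L < 1 →
        ∃ h : H, h ≠ 0 ∧ ContinuousLinearMap.adjoint T h = lam • h) :=
  stmt_6_general T S hS1 hS2 L hL
end

section
/- Let S_λ be a bounded left-invertible weighted shift with positive weights on a countably infinite rooted leafless directed tree with vertex set V. Then there exists an orthonormal basis {e'_j}_{j∈J} of ker S_λ* and natural numbers (k_j)_{j∈J} such that e'_j ∈ ℓ²(V_{k_j}) for every j ∈ J (a 'separated' basis: each basis vector is supported on a single generation). -/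
/-- A countably infinite rooted directed tree, encoded by a root, a parent map and a depth
function. -/
structure RootedDirectedTree (V : Type*) where
  root : V
  par : V → V
  depth : V → ℕ
  depth_eq_zero_iff : ∀ v, depth v = 0 ↔ v = root
  par_root : par root = root
  depth_par : ∀ v, v ≠ root → depth (par v) = depth v - 1

/-- A rooted directed tree is leafless if every vertex has a child. -/
def RootedDirectedTree.Leafless {V : Type*} (t : RootedDirectedTree V) : Prop :=
  ∀ v, ∃ u, t.par u = v ∧ t.depth u = t.depth v + 1

/-!
A weighted shift maps `ℓ²(V_k)` into `ℓ²(V_{k+1})`, so `(S* f)(v)` only depends on the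
restriction of `f` to the generation following that of `v`. Hence `ker S*` is invariant under
restriction to each generation, and is therefore the closed orthogonal sum of the subspaces
`ker S* ∩ ℓ²(V_k)`; the union of Hilbert bases of these subspaces is a separated basis.
-/

open scoped InnerProductSpace lp Function

universe u

section HilbertSpace

variable {𝕜 : Type*} [RCLike 𝕜] {E : Type u} [NormedAddCommGroup E] [InnerProductSpace 𝕜 E]

theorem Submodule.le_topologicalClosure_of_orthogonal_inf_eq_bot [CompleteSpace E]
    {U K : Submodule 𝕜 E} (hK : IsClosed (K : Set E)) (hUK : U ≤ K) (h : Uᗮ ⊓ K = ⊥) :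
    K ≤ U.topologicalClosure := by
  have hsup :=
    sup_orthogonal_inf_of_hasOrthogonalProjection (U.topologicalClosure_minimal hUK hK)
  rw [orthogonal_closure, h, sup_bot_eq] at hsup
  exact hsup.ge

theorem exists_orthonormal_le_topologicalClosure_span {ι : Type u} (W : ι → Submodule 𝕜 E)
    [∀ i, CompleteSpace (W i)] (hW : Pairwise ((· ⟂ ·) on W)) :
    ∃ (J : Type u) (b : J → E) (c : J → ι),
      Orthonormal 𝕜 b ∧ (∀ j, b j ∈ W (c j)) ∧
      ⨆ i, W i ≤ (Submodule.span 𝕜 (Set.range b)).topologicalClosure := by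
  choose w bas hbas using fun i => exists_hilbertBasis 𝕜 (W i)
  refine ⟨Σ i, w i, fun j => (j.2 : W j.1), Sigma.fst, ?_, fun j => (j.2 : W j.1).2,
    iSup_le fun i x hx => ?_⟩
  · exact (OrthogonalFamily.of_pairwise hW).orthonormal_sigma_orthonormal
      fun i => hbas i ▸ (bas i).orthonormal
  · have hx_dense :
        (⟨x, hx⟩ : W i) ∈ closure (Submodule.span 𝕜 (Set.range (bas i)) : Set (W i)) := by
      rw [← Submodule.topologicalClosure_coe, (bas i).dense_span]
      trivial
    have hspan : (W i).subtype '' (Submodule.span 𝕜 (Set.range (bas i))) ⊆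
        Submodule.span 𝕜 (Set.range fun j : Σ i, w i => ((j.2 : W j.1) : E)) := by
      rw [← Submodule.map_coe, Submodule.map_span]
      refine Submodule.span_mono ?_
      rintro _ ⟨_, ⟨k, rfl⟩, rfl⟩
      exact ⟨⟨i, k⟩, by simp [hbas i]⟩
    rw [← SetLike.mem_coe, Submodule.topologicalClosure_coe]
    exact closure_mono hspan
      (image_closure_subset_closure_image continuous_subtype_val ⟨_, hx_dense, rfl⟩)

end HilbertSpace

section Indicator

variable {𝕜 : Type*} [RCLike 𝕜] {V : Type*}

noncomputable def lpIndicator (s : Set V) (f : ℓ²(V, 𝕜)) : ℓ²(V, 𝕜) :=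
  ⟨s.indicator f, (lp.memℓp f).mono' fun v => norm_indicator_le_norm_self f v⟩

@[simp]
theorem coe_lpIndicator (s : Set V) (f : ℓ²(V, 𝕜)) : ⇑(lpIndicator s f) = s.indicator f :=
  rfl

theorem lpIndicator_lpIndicator (s : Set V) (f : ℓ²(V, 𝕜)) :
    lpIndicator s (lpIndicator s f) = lpIndicator s f :=
  lp.ext <| by simp

theorem inner_lpIndicator_right (s : Set V) (f g : ℓ²(V, 𝕜)) :
    ⟪g, lpIndicator s f⟫_𝕜 = ⟪lpIndicator s g, f⟫_𝕜 := by
  simp only [lp.inner_eq_tsum, coe_lpIndicator]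
  congr 1
  funext v
  by_cases hv : v ∈ s <;> simp [hv]

theorem inner_lpIndicator_self (s : Set V) (f : ℓ²(V, 𝕜)) :
    ⟪lpIndicator s f, f⟫_𝕜 = ⟪lpIndicator s f, lpIndicator s f⟫_𝕜 := by
  rw [inner_lpIndicator_right, lpIndicator_lpIndicator]

variable (𝕜) in
def lpSupportedOn (s : Set V) : Submodule 𝕜 ℓ²(V, 𝕜) where
  carrier := {f | ∀ v ∉ s, f v = 0}
  add_mem' hf hg v hv := by simp [hf v hv, hg v hv]
  zero_mem' _ _ := rfl
  smul_mem' c f hf v hv := by simp [hf v hv]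

@[simp]
theorem mem_lpSupportedOn {s : Set V} {f : ℓ²(V, 𝕜)} :
    f ∈ lpSupportedOn 𝕜 s ↔ ∀ v ∉ s, f v = 0 :=
  Iff.rfl

theorem isClosed_lpSupportedOn (s : Set V) :
    IsClosed (lpSupportedOn 𝕜 s : Set ℓ²(V, 𝕜)) := by
  have : (lpSupportedOn 𝕜 s : Set ℓ²(V, 𝕜)) = ⋂ v ∈ sᶜ, {f | f v = 0} := by
    ext f; simp
  rw [this]
  exact isClosed_biInter fun v _ => isClosed_eq (lp.evalCLM 𝕜 _ 2 v).continuous continuous_const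

theorem lpIndicator_mem_lpSupportedOn (s : Set V) (f : ℓ²(V, 𝕜)) :
    lpIndicator s f ∈ lpSupportedOn 𝕜 s :=
  fun v hv => by simp [hv]

theorem lpIndicator_eq_self {s : Set V} {f : ℓ²(V, 𝕜)} (hf : f ∈ lpSupportedOn 𝕜 s) :
    lpIndicator s f = f :=
  lp.ext <| Set.indicator_eq_self.2 fun v hv => by_contra fun hvs => hv (hf v hvs)

theorem lpIndicator_eq_zero {s t : Set V} (hst : Disjoint s t) {f : ℓ²(V, 𝕜)}
    (hf : f ∈ lpSupportedOn 𝕜 t) : lpIndicator s f = 0 :=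
  lp.ext <| funext fun v =>
    Set.indicator_apply_eq_zero.2 fun hv => hf v (hst.notMem_of_mem_left hv)

theorem isOrtho_lpSupportedOn {s t : Set V} (hst : Disjoint s t) :
    lpSupportedOn 𝕜 s ⟂ lpSupportedOn 𝕜 t := by
  rw [Submodule.isOrtho_iff_inner_eq]
  intro f hf g hg
  have hpointwise : ∀ v, ⟪f v, g v⟫_𝕜 = 0 := fun v => by
    by_cases hv : v ∈ s
    · simp [hg v (hst.notMem_of_mem_left hv)]
    · simp [hf v hv]
  rw [lp.inner_eq_tsum, tsum_congr hpointwise, tsum_zero]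

end Indicator

section GradedOperator

variable {𝕜 : Type*} [RCLike 𝕜] {V ι : Type*} [DecidableEq V]

theorem adjoint_apply_eq_inner_single (S : ℓ²(V, 𝕜) →L[𝕜] ℓ²(V, 𝕜)) (f : ℓ²(V, 𝕜))
    (v : V) :
    S.adjoint f v = ⟪S (lp.single 2 v 1), f⟫_𝕜 := by
  rw [← ContinuousLinearMap.adjoint_inner_right, lp.inner_single_left]
  simp

variable {S : ℓ²(V, 𝕜) →L[𝕜] ℓ²(V, 𝕜)} {d : V → ι} {σ : ι → ι}

theorem lpIndicator_mem_ker_adjoint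
    (hS : ∀ v, S (lp.single 2 v 1) ∈ lpSupportedOn 𝕜 (d ⁻¹' {σ (d v)}))
    {f : ℓ²(V, 𝕜)} (hf : f ∈ LinearMap.ker S.adjoint.toLinearMap) (k : ι) :
    lpIndicator (d ⁻¹' {k}) f ∈ LinearMap.ker S.adjoint.toLinearMap := by
  simp only [LinearMap.mem_ker, ContinuousLinearMap.coe_coe] at hf ⊢
  ext v
  rw [adjoint_apply_eq_inner_single, inner_lpIndicator_right]
  by_cases hk : σ (d v) = k
  · rw [lpIndicator_eq_self (hk ▸ hS v), ← adjoint_apply_eq_inner_single, hf]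
  · have hdisj : Disjoint (d ⁻¹' {k}) (d ⁻¹' {σ (d v)}) :=
      (Set.disjoint_singleton.2 (Ne.symm hk)).preimage d
    rw [lpIndicator_eq_zero hdisj (hS v), inner_zero_left]
    rfl

theorem ker_adjoint_le_topologicalClosure_iSup
    (hS : ∀ v, S (lp.single 2 v 1) ∈ lpSupportedOn 𝕜 (d ⁻¹' {σ (d v)})) :
    LinearMap.ker S.adjoint.toLinearMap ≤
      (⨆ k, LinearMap.ker S.adjoint.toLinearMap ⊓
        lpSupportedOn 𝕜 (d ⁻¹' {k})).topologicalClosure := by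
  refine Submodule.le_topologicalClosure_of_orthogonal_inf_eq_bot S.adjoint.isClosed_ker
    (iSup_le fun _ => inf_le_left) ((Submodule.eq_bot_iff _).2 fun g ⟨hgU, hgK⟩ => ?_)
  have hpiece : ∀ k, lpIndicator (d ⁻¹' {k}) g = 0 := fun k => by
    have hmem : lpIndicator (d ⁻¹' {k}) g ∈
        ⨆ k, LinearMap.ker S.adjoint.toLinearMap ⊓ lpSupportedOn 𝕜 (d ⁻¹' {k}) :=
      Submodule.mem_iSup_of_mem k
        ⟨lpIndicator_mem_ker_adjoint hS hgK k, lpIndicator_mem_lpSupportedOn _ _⟩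
    have := Submodule.inner_right_of_mem_orthogonal hmem hgU
    rwa [inner_lpIndicator_self, inner_self_eq_zero] at this
  refine lp.ext <| funext fun v => ?_
  simpa using congr_fun (congr_arg (⇑) (hpiece (d v))) v

end GradedOperator

namespace RootedDirectedTree

variable {V : Type*} (t : RootedDirectedTree V)

theorem depth_eq_depth_par_add_one {u : V} (hu : u ≠ t.root) :
    t.depth u = t.depth (t.par u) + 1 := by
  have hpos : t.depth u ≠ 0 := fun h => hu ((t.depth_eq_zero_iff u).1 h)
  have := t.depth_par u hu
  omega

theorem weightedShift_single_mem_lpSupportedOn {𝕜 : Type*} [RCLike 𝕜] [DecidableEq V]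
    (lam : V → 𝕜) (S : ℓ²(V, 𝕜) →L[𝕜] ℓ²(V, 𝕜))
    (hS : ∀ f v, S f v = if v = t.root then 0 else lam v * f (t.par v)) (v : V) :
    S (lp.single 2 v 1) ∈ lpSupportedOn 𝕜 (t.depth ⁻¹' {t.depth v + 1}) := by
  intro u hu
  rw [hS]
  split_ifs with hroot
  · rfl
  · have hpar : t.par u ≠ v := fun h => hu (h ▸ t.depth_eq_depth_par_add_one hroot)
    rw [lp.single_apply_ne 2 v _ hpar, mul_zero]

end RootedDirectedTree

theorem stmt_7_general {V : Type} [DecidableEq V]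
    (t : RootedDirectedTree V)
    (lam : V → ℝ)
    (Sl : lp (fun _ : V => ℂ) 2 →L[ℂ] lp (fun _ : V => ℂ) 2)
    (hSl : ∀ (f : lp (fun _ : V => ℂ) 2) (v : V),
      Sl f v = if v = t.root then 0 else (lam v : ℂ) * f (t.par v)) :
    ∃ (J : Type) (b : J → lp (fun _ : V => ℂ) 2) (k : J → ℕ),
      Orthonormal ℂ b ∧
      (∀ j, b j ∈ LinearMap.ker (ContinuousLinearMap.adjoint Sl : lp (fun _ : V => ℂ) 2 →ₗ[ℂ] lp (fun _ : V => ℂ) 2)) ∧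
      (∀ (j : J) (u : V), t.depth u ≠ k j → b j u = 0) ∧
      (LinearMap.ker (ContinuousLinearMap.adjoint Sl : lp (fun _ : V => ℂ) 2 →ₗ[ℂ] lp (fun _ : V => ℂ) 2) : Set (lp (fun _ : V => ℂ) 2)) ⊆
        closure (Submodule.span ℂ (Set.range b) : Set (lp (fun _ : V => ℂ) 2)) := by
  let W : ℕ → Submodule ℂ ℓ²(V, ℂ) := fun k =>
    LinearMap.ker Sl.adjoint.toLinearMap ⊓ lpSupportedOn ℂ (t.depth ⁻¹' {k})
  have hW_complete : ∀ k, CompleteSpace (W k) := fun k =>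
    (Sl.adjoint.isClosed_ker.inter (isClosed_lpSupportedOn _)).completeSpace_coe
  have hW_ortho : Pairwise ((· ⟂ ·) on W) := fun i j hij =>
    (isOrtho_lpSupportedOn ((Set.disjoint_singleton.2 hij).preimage t.depth)).mono
      inf_le_right inf_le_right
  obtain ⟨J, b, k, hb, hbW, hW_le⟩ := exists_orthonormal_le_topologicalClosure_span W hW_ortho
  refine ⟨J, b, k, hb, fun j => (hbW j).1, fun j => (hbW j).2, ?_⟩
  rw [← Submodule.topologicalClosure_coe]
  have hker_le := ker_adjoint_le_topologicalClosure_iSup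
    (t.weightedShift_single_mem_lpSupportedOn _ Sl hSl)
  exact hker_le.trans
    (Submodule.topologicalClosure_minimal _ hW_le (Submodule.isClosed_topologicalClosure _))

/-- Let `S_λ` be a bounded left-invertible weighted shift with positive
weights on a countably infinite rooted leafless directed tree with vertex set `V`.  Then
there is an orthonormal basis `{e'_j}_{j∈J}` of `ker S_λ*` and natural numbers `(k_j)` such
that each `e'_j` is supported on the single generation `V_{k_j}`. -/
theorem stmt_7 {V : Type} [Countable V] [Infinite V] [DecidableEq V]
    (t : RootedDirectedTree V) (hleafless : t.Leafless)
    (lam : V → ℝ) (hlam : ∀ v, v ≠ t.root → 0 < lam v)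
    (Sl : lp (fun _ : V => ℂ) 2 →L[ℂ] lp (fun _ : V => ℂ) 2)
    (hSl : ∀ (f : lp (fun _ : V => ℂ) 2) (v : V),
      Sl f v = if v = t.root then 0 else (lam v : ℂ) * f (t.par v))
    (hbelow : ∃ α : ℝ, 0 < α ∧ ∀ f : lp (fun _ : V => ℂ) 2, α * ‖f‖ ^ 2 ≤ ‖Sl f‖ ^ 2) :
    ∃ (J : Type) (b : J → lp (fun _ : V => ℂ) 2) (k : J → ℕ),
      Orthonormal ℂ b ∧
      (∀ j, b j ∈ LinearMap.ker (ContinuousLinearMap.adjoint Sl : lp (fun _ : V => ℂ) 2 →ₗ[ℂ] lp (fun _ : V => ℂ) 2)) ∧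
      (∀ (j : J) (u : V), t.depth u ≠ k j → b j u = 0) ∧
      (LinearMap.ker (ContinuousLinearMap.adjoint Sl : lp (fun _ : V => ℂ) 2 →ₗ[ℂ] lp (fun _ : V => ℂ) 2) : Set (lp (fun _ : V => ℂ) 2)) ⊆
        closure (Submodule.span ℂ (Set.range b) : Set (lp (fun _ : V => ℂ) 2)) :=
  stmt_7_general t lam Sl hSl
end

section
/- Let S_λ be a bounded left-invertible weighted shift with positive weights on a countably infinite rooted leafless directed tree with vertex set V; set E = ker S_λ*, P_E the orthogonal projection onto E, L = (S_λ*S_λ)⁻¹S_λ*, and let P_k be the orthogonal projection onto ℓ²(V_k). Let w ∈ ℂ with |w| = 1 and for f ∈ ℓ²(V) define f_w(u) = w^{|u|} f(u). Then: (i) ‖f_w‖ = ‖f‖ for every f ∈ ℓ²(V); (ii) the operator D_w given by D_w g = Σ_{k≥0} w^k P_k g maps E into E; (iii) for every f ∈ ℓ²(V) and every n ∈ ℕ, P_E L^n (f_w) = w^n · D_w(P_E L^n f). -/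
/-!
The rotation `D_w f = (w ^ |u| * f u)_u` is a unitary operator on `ℓ²(V)`, and since `S_λ` raises
depth by exactly one, `D_w S_λ = w S_λ D_w`. Hence conjugation by `D_w`, a ⋆-automorphism of the
operator algebra, multiplies `S_λ` by `w` and `S_λ*` by `w̄`; it fixes `S_λ*S_λ` (as `|w| = 1`),
hence also its inverse, and so multiplies `L^n` by `w̄ ^ n`. Being a unitary mapping
`E = ker S_λ*` onto itself, `D_w` commutes with `P_E`.
-/

open scoped ENNReal

namespace lp

variable {ι 𝕜 : Type*} {E : ι → Type*} [NormedField 𝕜] [∀ i, NormedAddCommGroup (E i)]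
  [∀ i, NormedSpace 𝕜 (E i)] {p : ℝ≥0∞}

theorem norm_eq_of_forall_norm_apply_eq [Fact (1 ≤ p)] {f g : lp E p}
    (h : ∀ i, ‖f i‖ = ‖g i‖) : ‖f‖ = ‖g‖ := by
  rcases p.trichotomy with rfl | rfl | hp
  · exact absurd (Fact.out : (1 : ℝ≥0∞) ≤ 0) (by norm_num)
  · simp only [lp.norm_eq_ciSup, h]
  · simp only [lp.norm_eq_tsum_rpow hp, h]

theorem _root_.Memℓp.smul_of_norm_eq_one {f : ∀ i, E i} (hf : Memℓp f p) {a : ι → 𝕜}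
    (ha : ∀ i, ‖a i‖ = 1) : Memℓp (fun i => a i • f i) p :=
  memℓp_norm_iff.1 (by simpa only [norm_smul, ha, one_mul] using memℓp_norm_iff.2 hf)

variable [Fact (1 ≤ p)]

noncomputable def diagonalIsometry (a : ι → 𝕜) (ha : ∀ i, ‖a i‖ = 1) : lp E p ≃ₗᵢ[𝕜] lp E p where
  toFun f := ⟨fun i => a i • f i, (lp.memℓp f).smul_of_norm_eq_one ha⟩
  invFun f := ⟨fun i => (a i)⁻¹ • f i,
    (lp.memℓp f).smul_of_norm_eq_one fun i => by rw [norm_inv, ha, inv_one]⟩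
  map_add' f g := by ext i; exact smul_add (a i) (f i) (g i)
  map_smul' c f := by ext i; simp [smul_comm (a i) c]
  left_inv f := by ext i; simp [smul_smul, ← norm_ne_zero_iff, ha]
  right_inv f := by ext i; simp [smul_smul, ← norm_ne_zero_iff, ha]
  norm_map' f := norm_eq_of_forall_norm_apply_eq fun i => by simp [norm_smul, ha]

end lp

theorem map_eq_self_of_inverse {M F : Type*} [Monoid M] [FunLike F M M] [MonoidHomClass F M M]
    (φ : F) {a b : M} (ha : φ a = a) (hba : b * a = 1) (hab : a * b = 1) : φ b = b :=
  left_inv_eq_right_inv (by rw [← ha, ← map_mul, hba, map_one]) hab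

namespace StarAlgEquiv

variable {R A : Type*} [CommSemiring R] [StarRing R] [Semiring A] [StarRing A] [Algebra R A]
  [StarModule R A] (φ : A ≃⋆ₐ[R] A) {s : A} {c : R}

theorem map_star_mul_self_of_map_eq_smul (hc : star c * c = 1) (hs : φ s = c • s) :
    φ (star s * s) = star s * s := by
  rw [map_mul, map_star, hs, star_smul, smul_mul_smul_comm, hc, one_smul]

theorem map_leftInverse_pow_of_map_eq_smul (hc : star c * c = 1) (hs : φ s = c • s) {t : A}
    (hts : t * (star s * s) = 1) (hst : star s * s * t = 1) (n : ℕ) :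
    φ ((t * star s) ^ n) = star c ^ n • (t * star s) ^ n := by
  have ht : φ t = t :=
    map_eq_self_of_inverse φ (φ.map_star_mul_self_of_map_eq_smul hc hs) hts hst
  rw [map_pow, map_mul, ht, map_star, hs, star_smul, mul_smul_comm, smul_pow]

end StarAlgEquiv

namespace LinearIsometryEquiv

variable {𝕜 H : Type*} [RCLike 𝕜] [NormedAddCommGroup H] [InnerProductSpace 𝕜 H]
  (e : H ≃ₗᵢ[𝕜] H)

theorem apply_apply_eq_smul_of_conjStarAlgEquiv_eq_smul [CompleteSpace H] {x : H →L[𝕜] H}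
    {c : 𝕜} (h : e.conjStarAlgEquiv x = c • x) (y : H) : e (x y) = c • x (e y) := by
  simpa using congr($h (e y))

theorem map_ker_eq_of_conjStarAlgEquiv_eq_smul [CompleteSpace H] {x : H →L[𝕜] H} {c : 𝕜}
    (hc : c ≠ 0) (h : e.conjStarAlgEquiv x = c • x) :
    (LinearMap.ker (x : H →ₗ[𝕜] H)).map (e.toLinearEquiv : H →ₗ[𝕜] H) =
      LinearMap.ker (x : H →ₗ[𝕜] H) := by
  ext v
  rw [Submodule.mem_map_equiv, LinearMap.mem_ker, LinearMap.mem_ker, ContinuousLinearMap.coe_coe,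
    ← e.map_eq_zero_iff, e.apply_apply_eq_smul_of_conjStarAlgEquiv_eq_smul h]
  simp [hc]

theorem map_starProjection_of_map_eq (K : Submodule 𝕜 H) [K.HasOrthogonalProjection]
    (hK : K.map (e.toLinearEquiv : H →ₗ[𝕜] H) = K) (x : H) :
    e (K.starProjection x) = K.starProjection (e x) := by
  have := Submodule.starProjection_map_apply e K (e x)
  simp only [hK] at this
  simpa using this.symm

end LinearIsometryEquiv

namespace RootedDirectedTree

variable {V : Type} (t : RootedDirectedTree V) (w : ℂ) (hw : ‖w‖ = 1)

noncomputable def rotation : lp (fun _ : V => ℂ) 2 ≃ₗᵢ[ℂ] lp (fun _ : V => ℂ) 2 :=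
  lp.diagonalIsometry (fun u => w ^ t.depth u) fun u => by rw [norm_pow, hw, one_pow]

theorem rotation_apply (f : lp (fun _ : V => ℂ) 2) (u : V) :
    t.rotation w hw f u = w ^ t.depth u * f u :=
  rfl

variable [DecidableEq V] {lam : V → ℂ} {S : lp (fun _ : V => ℂ) 2 →L[ℂ] lp (fun _ : V => ℂ) 2}

theorem rotation_weightedShift
    (hS : ∀ f v, S f v = if v = t.root then 0 else lam v * f (t.par v))
    (f : lp (fun _ : V => ℂ) 2) :
    t.rotation w hw (S f) = w • S (t.rotation w hw f) := by
  ext v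
  rw [lp.coeFn_smul, Pi.smul_apply, smul_eq_mul, rotation_apply, hS, hS]
  split_ifs with hv
  · simp
  · obtain ⟨m, hm⟩ := Nat.exists_eq_add_one_of_ne_zero (mt (t.depth_eq_zero_iff v).1 hv)
    have hpar : t.depth (t.par v) = m := by rw [t.depth_par v hv, hm, Nat.add_sub_cancel]
    rw [rotation_apply, hm, hpar, pow_succ]
    ring

theorem conjStarAlgEquiv_rotation_weightedShift
    (hS : ∀ f v, S f v = if v = t.root then 0 else lam v * f (t.par v)) :
    (t.rotation w hw).conjStarAlgEquiv S = w • S := by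
  ext1 f
  simpa using t.rotation_weightedShift w hw hS ((t.rotation w hw).symm f)

end RootedDirectedTree

theorem stmt_8_general {V : Type} [DecidableEq V]
    (t : RootedDirectedTree V)
    (lam : V → ℝ)
    (Sl : lp (fun _ : V => ℂ) 2 →L[ℂ] lp (fun _ : V => ℂ) 2)
    (hSl : ∀ (f : lp (fun _ : V => ℂ) 2) (v : V),
      Sl f v = if v = t.root then 0 else (lam v : ℂ) * f (t.par v))
    (Sinv : lp (fun _ : V => ℂ) 2 →L[ℂ] lp (fun _ : V => ℂ) 2)
    (hS1 : Sinv * (ContinuousLinearMap.adjoint Sl * Sl) = 1)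
    (hS2 : (ContinuousLinearMap.adjoint Sl * Sl) * Sinv = 1)
    (L : lp (fun _ : V => ℂ) 2 →L[ℂ] lp (fun _ : V => ℂ) 2)
    (hL : L = Sinv * ContinuousLinearMap.adjoint Sl)
    (w : ℂ) (hw : ‖w‖ = 1) :
    -- (i) the rotation `f_w` exists in `ℓ²(V)` and has the same norm as `f`
    (∀ f : lp (fun _ : V => ℂ) 2, ∃ fw : lp (fun _ : V => ℂ) 2,
      (∀ u : V, fw u = w ^ (t.depth u) * f u) ∧ ‖fw‖ = ‖f‖) ∧
    -- (ii) `D_w` maps `ker S_λ*` into itself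
    (∀ g ∈ LinearMap.ker (ContinuousLinearMap.adjoint Sl : lp (fun _ : V => ℂ) 2 →ₗ[ℂ] lp (fun _ : V => ℂ) 2),
      ∀ gw : lp (fun _ : V => ℂ) 2, (∀ u : V, gw u = w ^ (t.depth u) * g u) →
        gw ∈ LinearMap.ker (ContinuousLinearMap.adjoint Sl : lp (fun _ : V => ℂ) 2 →ₗ[ℂ] lp (fun _ : V => ℂ) 2)) ∧
    -- (iii) `P_E L^n (f_w) = w^n · D_w (P_E L^n f)` pointwise
    (∀ f fw : lp (fun _ : V => ℂ) 2, (∀ u : V, fw u = w ^ (t.depth u) * f u) →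
      ∀ (n : ℕ) (u : V),
        (↑(Submodule.orthogonalProjectionOnto (LinearMap.ker (ContinuousLinearMap.adjoint Sl : lp (fun _ : V => ℂ) 2 →ₗ[ℂ] lp (fun _ : V => ℂ) 2))
            ((L ^ n) fw)) : lp (fun _ : V => ℂ) 2) u =
          w ^ n * (w ^ (t.depth u) *
            (↑(Submodule.orthogonalProjectionOnto (LinearMap.ker (ContinuousLinearMap.adjoint Sl : lp (fun _ : V => ℂ) 2 →ₗ[ℂ] lp (fun _ : V => ℂ) 2))
              ((L ^ n) f)) : lp (fun _ : V => ℂ) 2) u)) := by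
  set e := t.rotation w hw
  have hw_star : star w * w = 1 := by
    rw [Complex.star_def, RCLike.conj_mul, hw]; norm_num
  have hw_ne : star w ≠ 0 := star_ne_zero.2 (norm_ne_zero_iff.1 (hw.trans_ne one_ne_zero))
  have hS : e.conjStarAlgEquiv Sl = w • Sl := t.conjStarAlgEquiv_rotation_weightedShift w hw hSl
  have hS_adjoint : e.conjStarAlgEquiv (ContinuousLinearMap.adjoint Sl) =
      star w • ContinuousLinearMap.adjoint Sl := by
    rw [← ContinuousLinearMap.star_eq_adjoint, map_star, hS, star_smul]
  have hker := e.map_ker_eq_of_conjStarAlgEquiv_eq_smul hw_ne hS_adjoint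
  have hL_pow : ∀ n f, (L ^ n) (e f) = w ^ n • e ((L ^ n) f) := by
    intro n f
    have hconj : e.conjStarAlgEquiv (L ^ n) = star w ^ n • L ^ n :=
      hL ▸ e.conjStarAlgEquiv.map_leftInverse_pow_of_map_eq_smul hw_star hS hS1 hS2 n
    rw [e.apply_apply_eq_smul_of_conjStarAlgEquiv_eq_smul hconj, smul_smul, ← mul_pow, mul_comm,
      hw_star, one_pow, one_smul]
  have hrot : ∀ f fw : lp (fun _ : V => ℂ) 2, (∀ u, fw u = w ^ t.depth u * f u) → fw = e f :=
    fun f fw h => lp.ext (funext h)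
  refine ⟨fun f => ⟨e f, fun u => rfl, e.norm_map f⟩, fun g hg gw hgw => ?_, fun f fw hf n u => ?_⟩
  · exact hrot g gw hgw ▸ hker ▸ Submodule.mem_map_of_mem hg
  · rw [hrot f fw hf, hL_pow, map_smul, Submodule.coe_smul, ← Submodule.starProjection_apply,
      ← e.map_starProjection_of_map_eq _ hker, Submodule.starProjection_apply, lp.coeFn_smul,
      Pi.smul_apply, smul_eq_mul, RootedDirectedTree.rotation_apply]

/-- Rotation by a unimodular `w`: (i) `‖f_w‖ = ‖f‖`; (ii) the diagonal
operator `D_w` (given pointwise by `(D_w g)(u) = w^{|u|} g(u)`) maps `E = ker S_λ*` into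
itself; (iii) `P_E L^n (f_w) = w^n · D_w (P_E L^n f)` for all `f` and `n`. -/
theorem stmt_8 {V : Type} [Countable V] [Infinite V] [DecidableEq V]
    (t : RootedDirectedTree V) (hleafless : t.Leafless)
    (lam : V → ℝ) (hlam : ∀ v, v ≠ t.root → 0 < lam v)
    (Sl : lp (fun _ : V => ℂ) 2 →L[ℂ] lp (fun _ : V => ℂ) 2)
    (hSl : ∀ (f : lp (fun _ : V => ℂ) 2) (v : V),
      Sl f v = if v = t.root then 0 else (lam v : ℂ) * f (t.par v))
    (hbelow : ∃ α : ℝ, 0 < α ∧ ∀ f : lp (fun _ : V => ℂ) 2, α * ‖f‖ ^ 2 ≤ ‖Sl f‖ ^ 2)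
    (Sinv : lp (fun _ : V => ℂ) 2 →L[ℂ] lp (fun _ : V => ℂ) 2)
    (hS1 : Sinv * (ContinuousLinearMap.adjoint Sl * Sl) = 1)
    (hS2 : (ContinuousLinearMap.adjoint Sl * Sl) * Sinv = 1)
    (L : lp (fun _ : V => ℂ) 2 →L[ℂ] lp (fun _ : V => ℂ) 2)
    (hL : L = Sinv * ContinuousLinearMap.adjoint Sl)
    (w : ℂ) (hw : ‖w‖ = 1) :
    -- (i) the rotation `f_w` exists in `ℓ²(V)` and has the same norm as `f`
    (∀ f : lp (fun _ : V => ℂ) 2, ∃ fw : lp (fun _ : V => ℂ) 2,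
      (∀ u : V, fw u = w ^ (t.depth u) * f u) ∧ ‖fw‖ = ‖f‖) ∧
    -- (ii) `D_w` maps `ker S_λ*` into itself
    (∀ g ∈ LinearMap.ker (ContinuousLinearMap.adjoint Sl : lp (fun _ : V => ℂ) 2 →ₗ[ℂ] lp (fun _ : V => ℂ) 2),
      ∀ gw : lp (fun _ : V => ℂ) 2, (∀ u : V, gw u = w ^ (t.depth u) * g u) →
        gw ∈ LinearMap.ker (ContinuousLinearMap.adjoint Sl : lp (fun _ : V => ℂ) 2 →ₗ[ℂ] lp (fun _ : V => ℂ) 2)) ∧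
    -- (iii) `P_E L^n (f_w) = w^n · D_w (P_E L^n f)` pointwise
    (∀ f fw : lp (fun _ : V => ℂ) 2, (∀ u : V, fw u = w ^ (t.depth u) * f u) →
      ∀ (n : ℕ) (u : V),
        (↑(Submodule.orthogonalProjectionOnto (LinearMap.ker (ContinuousLinearMap.adjoint Sl : lp (fun _ : V => ℂ) 2 →ₗ[ℂ] lp (fun _ : V => ℂ) 2))
            ((L ^ n) fw)) : lp (fun _ : V => ℂ) 2) u =
          w ^ n * (w ^ (t.depth u) *
            (↑(Submodule.orthogonalProjectionOnto (LinearMap.ker (ContinuousLinearMap.adjoint Sl : lp (fun _ : V => ℂ) 2 →ₗ[ℂ] lp (fun _ : V => ℂ) 2))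
              ((L ^ n) f)) : lp (fun _ : V => ℂ) 2) u)) :=
  stmt_8_general t lam Sl hSl Sinv hS1 hS2 L hL w hw
end

section
/- Let S_λ be a bounded balanced weighted shift with positive weights on a countably infinite rooted directed tree with vertex set V. Let f ∈ ℓ²(V_k) and g ∈ ℓ²(V_l) for some k, l ∈ ℕ, let n ∈ ℕ, and let u' ∈ V with |u'| = k + n. Then ⟨S_λ^n f, S_λ^n g⟩ = (Π_{j=1}^{n} ‖S_λ e_{par^j(u')}‖²) · ⟨f, g⟩. In particular, if f ⟂ g then S_λ^n f ⟂ S_λ^n g for all n ∈ ℕ. -/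
/-!
For a weighted shift `S`, the operator `S† S` is diagonal in the standard basis, with entry
`‖S e_u‖²` at `u`: the vectors `S e_u` have disjoint supports (the children of `u`), and
`S f` agrees with `f u • S e_u` on the children of `u`. Hence `⟪S F, S G⟫ = ∑ ‖S e_u‖² ⟪F u, G u⟫`,
and if `F` lives on one level of a balanced tree this is `‖S e_w‖² ⟪F, G⟫` for any `w` on that
level. Since `S` maps level `k` to level `k + 1`, iterating gives the product formula, whose
factors are the levels `k, …, k + n - 1` read off the ancestors of `u'`.
-/

open scoped lp

namespace RootedDirectedTree

variable {V : Type*} (t : RootedDirectedTree V)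

theorem depth_par_eq_sub_one (v : V) : t.depth (t.par v) = t.depth v - 1 := by
  by_cases hroot : v = t.root
  · rw [hroot, t.par_root, (t.depth_eq_zero_iff _).mpr rfl]
  · exact t.depth_par v hroot

theorem depth_iterate_par (v : V) (j : ℕ) : t.depth (t.par^[j] v) = t.depth v - j := by
  induction j with
  | zero => rfl
  | succ j ih =>
    rw [Function.iterate_succ_apply', depth_par_eq_sub_one, ih]
    omega

def SupportedAtDepth (k : ℕ) (f : ℓ²(V, ℂ)) : Prop :=
  ∀ u, t.depth u ≠ k → f u = 0

theorem SupportedAtDepth.eq_zero_of_forall_depth_ne {t : RootedDirectedTree V} {k : ℕ}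
    {f : ℓ²(V, ℂ)} (hf : t.SupportedAtDepth k f) (hk : ∀ u, t.depth u ≠ k) : f = 0 :=
  lp.ext <| funext fun u => hf u (hk u)

variable [DecidableEq V]

def IsWeightedShift (lam : V → ℝ) (S : ℓ²(V, ℂ) →L[ℂ] ℓ²(V, ℂ)) : Prop :=
  ∀ f v, S f v = if v = t.root then 0 else (lam v : ℂ) * f (t.par v)

def IsBalanced (S : ℓ²(V, ℂ) →L[ℂ] ℓ²(V, ℂ)) : Prop :=
  ∀ u v, t.depth u = t.depth v → ‖S (lp.single 2 u 1)‖ = ‖S (lp.single 2 v 1)‖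

variable {t}

namespace IsWeightedShift

variable {lam : V → ℝ} {S : ℓ²(V, ℂ) →L[ℂ] ℓ²(V, ℂ)} (hS : t.IsWeightedShift lam S)
include hS

theorem supportedAtDepth_map {a : ℕ} {F : ℓ²(V, ℂ)} (hF : t.SupportedAtDepth a F) :
    t.SupportedAtDepth (a + 1) (S F) := by
  intro u hu
  rw [hS]
  by_cases hroot : u = t.root
  · rw [if_pos hroot]
  · have hpar : t.depth (t.par u) ≠ a := by
      have hpos := (t.depth_eq_zero_iff u).not.mpr hroot
      rw [t.depth_par u hroot]
      omega
    rw [if_neg hroot, hF _ hpar, mul_zero]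

theorem supportedAtDepth_pow {a : ℕ} {F : ℓ²(V, ℂ)} (hF : t.SupportedAtDepth a F) (n : ℕ) :
    t.SupportedAtDepth (a + n) ((S ^ n) F) := by
  induction n with
  | zero => simpa using hF
  | succ n ih =>
    rw [pow_succ', mul_apply_eq_comp, ← add_assoc]
    exact hS.supportedAtDepth_map ih

theorem inner_map_single_map (u : V) (F : ℓ²(V, ℂ)) :
    inner ℂ (S (lp.single 2 u 1)) (S F) = ((‖S (lp.single 2 u 1)‖ ^ 2 : ℝ) : ℂ) * F u := by
  have hagree : inner ℂ (S (lp.single 2 u 1)) (S F)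
      = inner ℂ (S (lp.single 2 u 1)) (F u • S (lp.single 2 u 1)) := by
    rw [lp.inner_eq_tsum, lp.inner_eq_tsum]
    refine tsum_congr fun v => ?_
    simp only [lp.coeFn_smul, Pi.smul_apply, smul_eq_mul, hS _ v]
    by_cases hroot : v = t.root
    · simp [hroot]
    by_cases hchild : t.par v = u
    · simp [hroot, hchild, mul_comm]
    · simp [hroot, Pi.single_eq_of_ne hchild]
  rw [hagree, inner_smul_right, inner_self_eq_norm_sq_to_K, mul_comm]
  push_cast
  rfl

theorem adjoint_map_apply (F : ℓ²(V, ℂ)) (u : V) :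
    (ContinuousLinearMap.adjoint S (S F)) u = ((‖S (lp.single 2 u 1)‖ ^ 2 : ℝ) : ℂ) * F u := by
  have hcoord := lp.inner_single_left (𝕜 := ℂ) u (1 : ℂ) (ContinuousLinearMap.adjoint S (S F))
  rw [ContinuousLinearMap.adjoint_inner_right, hS.inner_map_single_map] at hcoord
  simpa [RCLike.inner_apply] using hcoord.symm

theorem inner_map_map (F G : ℓ²(V, ℂ)) :
    inner ℂ (S F) (S G) = ∑' u, ((‖S (lp.single 2 u 1)‖ ^ 2 : ℝ) : ℂ) * inner ℂ (F u) (G u) := by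
  rw [← ContinuousLinearMap.adjoint_inner_right, lp.inner_eq_tsum]
  refine tsum_congr fun u => ?_
  simp only [hS.adjoint_map_apply, RCLike.inner_apply]
  ring

theorem inner_map_map_of_supportedAtDepth (hbal : t.IsBalanced S) {a : ℕ} {F : ℓ²(V, ℂ)}
    (hF : t.SupportedAtDepth a F) (G : ℓ²(V, ℂ)) {w : V} (hw : t.depth w = a) :
    inner ℂ (S F) (S G) = ((‖S (lp.single 2 w 1)‖ ^ 2 : ℝ) : ℂ) * inner ℂ F G := by
  rw [hS.inner_map_map, lp.inner_eq_tsum, ← tsum_mul_left]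
  refine tsum_congr fun u => ?_
  by_cases hFu : F u = 0
  · simp [hFu]
  · rw [hbal u w ((not_not.mp (mt (hF u) hFu)).trans hw.symm)]

theorem inner_pow_map_pow (hbal : t.IsBalanced S) {k : ℕ} {F : ℓ²(V, ℂ)}
    (hF : t.SupportedAtDepth k F) (G : ℓ²(V, ℂ)) (n : ℕ) {u' : V} (hu' : t.depth u' = k + n) :
    inner ℂ ((S ^ n) F) ((S ^ n) G) =
      ((∏ j ∈ Finset.Icc 1 n, ‖S (lp.single 2 (t.par^[j] u') 1)‖ ^ 2 : ℝ) : ℂ) * inner ℂ F G := by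
  induction n generalizing k F G with
  | zero => simp
  | succ n ih =>
    have hw : t.depth (t.par^[n + 1] u') = k := by rw [t.depth_iterate_par, hu']; omega
    rw [pow_succ, mul_apply_eq_comp, mul_apply_eq_comp,
      ih (hS.supportedAtDepth_map hF) (S G) (by omega),
      hS.inner_map_map_of_supportedAtDepth hbal hF G hw,
      Finset.prod_Icc_succ_top (by omega)]
    push_cast
    ring

theorem inner_pow_map_pow_eq_zero (hbal : t.IsBalanced S) {k : ℕ} {F G : ℓ²(V, ℂ)}
    (hF : t.SupportedAtDepth k F) (hFG : inner ℂ F G = 0) (n : ℕ) :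
    inner ℂ ((S ^ n) F) ((S ^ n) G) = 0 := by
  by_cases hlevel : ∃ u', t.depth u' = k + n
  · obtain ⟨u', hu'⟩ := hlevel
    rw [hS.inner_pow_map_pow hbal hF G n hu', hFG, mul_zero]
  · rw [not_exists] at hlevel
    rw [(hS.supportedAtDepth_pow hF n).eq_zero_of_forall_depth_ne hlevel, inner_zero_left]

end IsWeightedShift

end RootedDirectedTree

theorem stmt_13_general {V : Type} [DecidableEq V]
    (t : RootedDirectedTree V)
    (lam : V → ℝ)
    (Sl : lp (fun _ : V => ℂ) 2 →L[ℂ] lp (fun _ : V => ℂ) 2)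
    (hSl : ∀ (f : lp (fun _ : V => ℂ) 2) (v : V),
      Sl f v = if v = t.root then 0 else (lam v : ℂ) * f (t.par v))
    (hbal : ∀ u v : V, t.depth u = t.depth v →
      ‖Sl (lp.single 2 u (1 : ℂ))‖ = ‖Sl (lp.single 2 v (1 : ℂ))‖)
    (k : ℕ) (f g : lp (fun _ : V => ℂ) 2)
    (hf : ∀ u : V, t.depth u ≠ k → f u = 0) :
    (∀ (n : ℕ) (u' : V), t.depth u' = k + n →
      inner (𝕜 := ℂ) ((Sl ^ n) f) ((Sl ^ n) g) =
        ((∏ j ∈ Finset.Icc 1 n, ‖Sl (lp.single 2 (t.par^[j] u') (1 : ℂ))‖ ^ 2 : ℝ) : ℂ) *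
          inner (𝕜 := ℂ) f g) ∧
    (inner (𝕜 := ℂ) f g = 0 → ∀ m : ℕ,
      inner (𝕜 := ℂ) ((Sl ^ m) f) ((Sl ^ m) g) = 0) :=
  have hS : t.IsWeightedShift lam Sl := hSl
  ⟨fun n _ hu' => hS.inner_pow_map_pow hbal hf g n hu',
    fun hfg => hS.inner_pow_map_pow_eq_zero hbal hf hfg⟩

/-- Let `S_λ` be a bounded balanced weighted shift on a countably infinite
rooted directed tree.  If `f ∈ ℓ²(V_k)`, `g ∈ ℓ²(V_l)`, `n ∈ ℕ` and `|u'| = k + n`, then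
`⟨S_λ^n f, S_λ^n g⟩ = (Π_{j=1}^{n} ‖S_λ e_{par^j(u')}‖²) · ⟨f, g⟩`; in particular `f ⟂ g`
implies `S_λ^m f ⟂ S_λ^m g` for all `m`. -/
theorem stmt_13 {V : Type} [Countable V] [Infinite V] [DecidableEq V]
    (t : RootedDirectedTree V)
    (lam : V → ℝ) (hlam : ∀ v, v ≠ t.root → 0 < lam v)
    (Sl : lp (fun _ : V => ℂ) 2 →L[ℂ] lp (fun _ : V => ℂ) 2)
    (hSl : ∀ (f : lp (fun _ : V => ℂ) 2) (v : V),
      Sl f v = if v = t.root then 0 else (lam v : ℂ) * f (t.par v))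
    (hbal : ∀ u v : V, t.depth u = t.depth v →
      ‖Sl (lp.single 2 u (1 : ℂ))‖ = ‖Sl (lp.single 2 v (1 : ℂ))‖)
    (k l : ℕ) (f g : lp (fun _ : V => ℂ) 2)
    (hf : ∀ u : V, t.depth u ≠ k → f u = 0)
    (hg : ∀ u : V, t.depth u ≠ l → g u = 0) :
    (∀ (n : ℕ) (u' : V), t.depth u' = k + n →
      inner (𝕜 := ℂ) ((Sl ^ n) f) ((Sl ^ n) g) =
        ((∏ j ∈ Finset.Icc 1 n, ‖Sl (lp.single 2 (t.par^[j] u') (1 : ℂ))‖ ^ 2 : ℝ) : ℂ) *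
          inner (𝕜 := ℂ) f g) ∧
    (inner (𝕜 := ℂ) f g = 0 → ∀ m : ℕ,
      inner (𝕜 := ℂ) ((Sl ^ m) f) ((Sl ^ m) g) = 0) :=
  stmt_13_general t lam Sl hSl hbal k f g hf
end
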